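/- Let q be a prime power and n, m, d integers with n, m ≥ 1 and 0 ≤ d < m·q. Then the F_q-rank of the matrix EVAL^m(ℙF_q^{n-1}, W_{d,n}) equals |W_{d,n}| = C(d+n−1, n−1); that is, its columns are F_q-linearly independent. -/

import Mathlib

/-- The `j`-th (multivariate) Hasse derivative of `Q`, i.e. the coefficient of `z^j`
in the expansion `Q(x+z) = ∑_j Q^{(j)}(x)·z^j`. -/
noncomputable def mvHasseDeriv {F : Type*} [CommSemiring F] {n : ℕ} (j : Fin n →₀ ℕ)
    (Q : MvPolynomial (Fin n) F) : MvPolynomial (Fin n) F :=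
  ∑ v ∈ Q.support, MvPolynomial.monomial (v - j)
    (Q.coeff v * ((∏ i, (v i).choose (j i) : ℕ) : F))

/-- The columns of the matrix `EVAL^m(S, W_{d,n})`: the column of the degree-`d` monomial
with exponent vector `v` is the vector of evaluations `f^{(j)}(x)` over the rows `(x,j)`
with `x ∈ S` and `wt(j) < m`. -/
noncomputable def evalCol (F : Type) [Field F] (n m d : ℕ) (S : Finset (Fin n → F))
    (v : {v : Fin n →₀ ℕ // (v.sum fun _ e => e) = d})
    (r : {r : (Fin n → F) × (Fin n →₀ ℕ) // r.1 ∈ S ∧ (r.2.sum fun _ e => e) < m}) : F :=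
  MvPolynomial.eval r.1.1 (mvHasseDeriv r.1.2 (MvPolynomial.monomial v.1 (1 : F)))

/-! Since `mvHasseDeriv j P` is homogeneous of degree `d - |j|` when `P` is homogeneous of degree
`d`, vanishing to order `m` at one point of a line through the origin propagates to the whole line
minus the origin; so a combination of the columns gives a homogeneous `P` of degree `d < mq`
vanishing to order `m` at every nonzero point of `F^n`, and it suffices to show `P = 0`.

Induct on `n`. Write `P = ∑ P_l x₀^l` with `P_k` the leading coefficient. For `a ≠ 0` and
`|i| < m`, the polynomial `t ↦ ∂^{(0,i)} P (t, a)` has degree `≤ k`, its `t^k`-coefficient is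
`∂^i P_k (a)`, and its `r`-th Hasse derivative is `∂^{(r,i)} P (t, a)`, so it has a root of
multiplicity `≥ m - |i|` at each of the `q` points of `F`. Hence `∂^i P_k (a) = 0` unless
`q (m - |i|) ≤ k`: `P_k` vanishes to order `m - ⌊k/q⌋` at all nonzero points, while
`d - k < (m - ⌊k/q⌋) q`, and induction gives `P_k = 0`. -/

open MvPolynomial

namespace Finsupp

variable {n : ℕ}

theorem degree_cons {M : Type*} [AddCommMonoid M] (r : M) (i : Fin n →₀ M) :
    (cons r i).degree = r + i.degree := by
  simp only [degree_eq_sum, Fin.sum_univ_succ, cons_zero, cons_succ]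

theorem cons_add_cons {M : Type*} [AddZeroClass M] (a b : M) (u v : Fin n →₀ M) :
    cons a u + cons b v = cons (a + b) (u + v) := by
  ext t
  refine Fin.cases ?_ (fun i => ?_) t <;> simp [cons_zero, cons_succ]

theorem natCard_degree_eq_choose (n d : ℕ) :
    Nat.card {v : Fin (n + 1) →₀ ℕ // (v.sum fun _ e => e) = d} = (d + n).choose n :=
  calc _ = Nat.card (Sym (Fin (n + 1)) d) := Nat.card_congr (Sym.equivNatSum (Fin (n + 1)) d).symm
    _ = (d + n).choose n := by
      rw [Nat.card_eq_fintype_card, Sym.card_sym_eq_choose, Fintype.card_fin,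
        Nat.add_right_comm, Nat.add_sub_cancel, add_comm, Nat.choose_symm_add]

end Finsupp

namespace Polynomial

variable {R : Type*} [CommRing R]

theorem le_rootMultiplicity_of_hasseDeriv_eval_eq_zero {g : R[X]} (hg : g ≠ 0) {b : R} {t : ℕ}
    (h : ∀ r < t, (hasseDeriv r g).eval b = 0) : t ≤ g.rootMultiplicity b := by
  rw [rootMultiplicity_eq_natTrailingDegree, ← taylor_apply]
  exact le_natTrailingDegree ((taylor_eq_zero b g).not.mpr hg) fun r hr => by
    rw [taylor_coeff, h r hr]

theorem card_mul_le_natDegree_of_le_rootMultiplicity [IsDomain R] [Fintype R] {g : R[X]} {t : ℕ}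
    (h : ∀ b, t ≤ g.rootMultiplicity b) : Fintype.card R * t ≤ g.natDegree := by
  classical
  have hle : t • (Finset.univ : Finset R).val ≤ g.roots := Multiset.le_iff_count.mpr fun b => by
    simpa [count_roots, Multiset.count_nsmul] using h b
  calc Fintype.card R * t = Multiset.card (t • (Finset.univ : Finset R).val) := by
        simp [mul_comm]
    _ ≤ Multiset.card g.roots := Multiset.card_le_card hle
    _ ≤ g.natDegree := card_roots' g

end Polynomial

section HasseDeriv

variable {F : Type*} [CommSemiring F] {n : ℕ}

theorem coeff_mvHasseDeriv (j : Fin n →₀ ℕ) (Q : MvPolynomial (Fin n) F) (u : Fin n →₀ ℕ) :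
    (mvHasseDeriv j Q).coeff u = Q.coeff (u + j) * ((∏ i, ((u + j) i).choose (j i) : ℕ) : F) := by
  classical
  rw [mvHasseDeriv, coeff_sum, Finset.sum_eq_single (u + j)]
  · rw [add_tsub_cancel_right, coeff_monomial, if_pos rfl]
  · intro v _ hne
    rw [coeff_monomial]
    split_ifs with h
    · -- `v - j = u` with `v ≠ u + j` forces `v i < j i` for some `i`, killing a binomial factor
      obtain ⟨i, hi⟩ : ∃ i, v i < j i := by
        by_contra! hle
        exact hne (by rw [← h, tsub_add_cancel_of_le (Finsupp.le_def.mpr hle)])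
      rw [Finset.prod_eq_zero (Finset.mem_univ i) (Nat.choose_eq_zero_of_lt hi), Nat.cast_zero,
        mul_zero]
    · rfl
  · intro hu
    rw [notMem_support_iff.mp hu, zero_mul, map_zero, coeff_zero]

noncomputable def mvHasseDerivₗ (j : Fin n →₀ ℕ) :
    MvPolynomial (Fin n) F →ₗ[F] MvPolynomial (Fin n) F where
  toFun := mvHasseDeriv j
  map_add' p q := by ext u; simp only [coeff_mvHasseDeriv, coeff_add, add_mul]
  map_smul' c p := by
    ext u
    simp only [coeff_mvHasseDeriv, coeff_smul, smul_eq_mul, RingHom.id_apply, mul_assoc]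

@[simp]
theorem mvHasseDeriv_zero_left (Q : MvPolynomial (Fin n) F) : mvHasseDeriv 0 Q = Q := by
  ext u; simp [coeff_mvHasseDeriv]

@[simp]
theorem mvHasseDeriv_zero_right (j : Fin n →₀ ℕ) :
    mvHasseDeriv j (0 : MvPolynomial (Fin n) F) = 0 :=
  map_zero (mvHasseDerivₗ j)

theorem coeff_finSuccEquiv_mvHasseDeriv_cons (P : MvPolynomial (Fin (n + 1)) F) (r : ℕ)
    (i : Fin n →₀ ℕ) (l : ℕ) :
    (finSuccEquiv F n (mvHasseDeriv (Finsupp.cons r i) P)).coeff l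
      = (l + r).choose r • mvHasseDeriv i ((finSuccEquiv F n P).coeff (l + r)) := by
  ext u
  have hprod : ∏ t, ((Finsupp.cons (l + r) (u + i)) t).choose (Finsupp.cons r i t)
      = (l + r).choose r * ∏ t, ((u + i) t).choose (i t) := by
    simp [Fin.prod_univ_succ, Finsupp.cons_zero, Finsupp.cons_succ]
  rw [finSuccEquiv_coeff_coeff, coeff_mvHasseDeriv, coeff_smul, coeff_mvHasseDeriv,
    finSuccEquiv_coeff_coeff, Finsupp.cons_add_cons, hprod, nsmul_eq_mul]
  push_cast
  ring

theorem MvPolynomial.IsHomogeneous.degree_eq {Q : MvPolynomial (Fin n) F} {d : ℕ}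
    (hQ : Q.IsHomogeneous d) {u : Fin n →₀ ℕ} (hu : Q.coeff u ≠ 0) : u.degree = d := by
  by_contra h
  exact hu (hQ.coeff_eq_zero h)

theorem isHomogeneous_mvHasseDeriv {Q : MvPolynomial (Fin n) F} {d : ℕ} (hQ : Q.IsHomogeneous d)
    (j : Fin n →₀ ℕ) : (mvHasseDeriv j Q).IsHomogeneous (d - j.degree) := by
  intro u hu
  rw [coeff_mvHasseDeriv] at hu
  have h := hQ.degree_eq (left_ne_zero_of_mul hu)
  have hu : u.degree = d - j.degree := by rw [map_add] at h; omega
  rw [← hu, Finsupp.degree_eq_weight_one]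
  rfl

theorem MvPolynomial.IsHomogeneous.eval_smul {Q : MvPolynomial (Fin n) F} {d : ℕ}
    (hQ : Q.IsHomogeneous d) (c : F) (x : Fin n → F) : eval (c • x) Q = c ^ d * eval x Q := by
  rw [eval_eq', eval_eq', Finset.mul_sum]
  refine Finset.sum_congr rfl fun v hv => ?_
  simp only [Pi.smul_apply, smul_eq_mul, mul_pow, Finset.prod_mul_distrib,
    Finset.prod_pow_eq_pow_sum, ← Finsupp.degree_eq_sum, hQ.degree_eq (mem_support_iff.mp hv)]
  ring

theorem MvPolynomial.IsHomogeneous.eq_monomial_single {P : MvPolynomial (Fin 1) F} {d : ℕ}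
    (hP : P.IsHomogeneous d) :
    P = monomial (Finsupp.single 0 d) (P.coeff (Finsupp.single 0 d)) := by
  ext v
  rw [coeff_monomial]
  split_ifs with h
  · rw [h]
  · refine hP.coeff_eq_zero fun hv => h (Finsupp.ext fun t => ?_)
    simpa [Fin.fin_one_eq_zero t, Finsupp.degree_eq_sum] using hv.symm

end HasseDeriv

section Vanishing

variable {F : Type*} {n : ℕ}

def VanishesToOrder [CommSemiring F] (m : ℕ) (P : MvPolynomial (Fin n) F) (x : Fin n → F) :
    Prop :=
  ∀ j : Fin n →₀ ℕ, j.degree < m → eval x (mvHasseDeriv j P) = 0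

theorem VanishesToOrder.smul [CommSemiring F] {m d : ℕ} {P : MvPolynomial (Fin n) F}
    (hP : P.IsHomogeneous d) {x : Fin n → F} (h : VanishesToOrder m P x) (c : F) :
    VanishesToOrder m P (c • x) := fun j hj => by
  rw [(isHomogeneous_mvHasseDeriv hP j).eval_smul, h j hj, mul_zero]

variable [Field F] [Fintype F]

open Polynomial in
theorem vanishesToOrder_leadingCoeff_finSuccEquiv {P : MvPolynomial (Fin (n + 1)) F} {m : ℕ}
    (hP : ∀ x ≠ 0, VanishesToOrder m P x) {a : Fin n → F} (ha : a ≠ 0) :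
    VanishesToOrder (m - (finSuccEquiv F n P).natDegree / Fintype.card F)
      (finSuccEquiv F n P).leadingCoeff a := by
  set k := (finSuccEquiv F n P).natDegree
  intro i hi
  by_contra hne
  set g : F[X] := (finSuccEquiv F n (mvHasseDeriv (Finsupp.cons 0 i) P)).map (eval a) with hg
  have hg_coeff (l : ℕ) : g.coeff l = eval a (mvHasseDeriv i ((finSuccEquiv F n P).coeff l)) := by
    simp [hg, Polynomial.coeff_map, coeff_finSuccEquiv_mvHasseDeriv_cons]
  have hg0 : g ≠ 0 := fun h => hne (by rw [leadingCoeff, ← hg_coeff, h, Polynomial.coeff_zero])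
  have hg_deg : g.natDegree ≤ k := natDegree_le_iff_coeff_eq_zero.mpr fun l hl => by
    rw [hg_coeff, coeff_eq_zero_of_natDegree_lt hl, mvHasseDeriv_zero_right, map_zero]
  have hasseDeriv_g (r : ℕ) :
      hasseDeriv r g = (finSuccEquiv F n (mvHasseDeriv (Finsupp.cons r i) P)).map (eval a) := by
    ext l
    rw [hasseDeriv_coeff, hg_coeff, Polynomial.coeff_map, coeff_finSuccEquiv_mvHasseDeriv_cons,
      nsmul_eq_mul, map_mul, map_natCast]
  have hmult (b : F) : m - i.degree ≤ g.rootMultiplicity b :=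
    le_rootMultiplicity_of_hasseDeriv_eval_eq_zero hg0 fun r hr => by
      rw [hasseDeriv_g, ← eval_eq_eval_mv_eval']
      exact hP _ (Matrix.cons_nonzero_iff.mpr (Or.inr ha)) _ (by rw [Finsupp.degree_cons]; omega)
  have hcard := (card_mul_le_natDegree_of_le_rootMultiplicity hmult).trans hg_deg
  have := (Nat.le_div_iff_mul_le Fintype.card_pos).mpr (mul_comm (m - i.degree) _ ▸ hcard)
  omega

theorem MvPolynomial.IsHomogeneous.eq_zero_of_forall_vanishesToOrder {m d : ℕ}
    {P : MvPolynomial (Fin (n + 1)) F} (hP : P.IsHomogeneous d) (hd : d < m * Fintype.card F)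
    (hvan : ∀ x ≠ 0, VanishesToOrder m P x) : P = 0 := by
  induction n generalizing m d with
  | zero =>
    have hm : 0 < m := Nat.pos_of_mul_pos_right (d.zero_le.trans_lt hd)
    have h1 := hvan 1 one_ne_zero 0 (by simpa using hm)
    rw [mvHasseDeriv_zero_left, hP.eq_monomial_single, eval_monomial] at h1
    rw [hP.eq_monomial_single]
    simpa using h1
  | succ n ih =>
    by_contra hP0
    set k := (finSuccEquiv F (n + 1) P).natDegree
    have hkd : k ≤ d := (natDegree_finSuccEquiv P).trans_le <|
      (degreeOf_le_totalDegree P 0).trans hP.totalDegree_le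
    have hk := Nat.div_mul_le_self k (Fintype.card F)
    refine Polynomial.leadingCoeff_ne_zero.mpr ((map_ne_zero_iff _ (AlgEquiv.injective _)).mpr hP0)
      (ih (hP.finSuccEquiv_coeff_isHomogeneous k (d - k) (by omega)) ?_
        fun a ha => vanishesToOrder_leadingCoeff_finSuccEquiv hvan ha)
    show d - k < (m - k / Fintype.card F) * Fintype.card F
    rw [Nat.sub_mul]
    omega

end Vanishing

section EvalMatrix

variable (F : Type) [Field F] {n : ℕ}

/-- `evalCol F n m d S v` is, definitionally, the image of the monomial `v` under this map. -/
noncomputable def evalHasseₗ (m : ℕ) (S : Finset (Fin n → F)) :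
    MvPolynomial (Fin n) F →ₗ[F]
      ({r : (Fin n → F) × (Fin n →₀ ℕ) // r.1 ∈ S ∧ (r.2.sum fun _ e => e) < m} → F) :=
  LinearMap.pi fun r => (aeval r.1.1).toLinearMap ∘ₗ mvHasseDerivₗ r.1.2

variable {F}

theorem vanishesToOrder_of_evalHasseₗ_eq_zero {m : ℕ} {S : Finset (Fin n → F)}
    {Q : MvPolynomial (Fin n) F} (hQ : evalHasseₗ F m S Q = 0) {x : Fin n → F} (hx : x ∈ S) :
    VanishesToOrder m Q x := fun j hj =>
  congrFun hQ ⟨(x, j), hx, hj⟩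

theorem linearIndependent_monomial_degree_eq (d : ℕ) :
    LinearIndependent F fun v : {v : Fin n →₀ ℕ // (v.sum fun _ e => e) = d} =>
      (monomial v.1 1 : MvPolynomial (Fin n) F) := by
  simpa [Function.comp_def] using
    (basisMonomials (Fin n) F).linearIndependent.comp _ Subtype.val_injective

theorem linearIndependent_evalCol [Fintype F] {m d : ℕ} (hd : d < m * Fintype.card F)
    (S : Finset (Fin (n + 1) → F)) (hS : ∀ x ≠ 0, ∃ w ∈ S, ∃ c : F, x = c • w) :
    LinearIndependent F (evalCol F (n + 1) m d S) := by
  refine (linearIndependent_monomial_degree_eq d).map (f := evalHasseₗ F m S) ?_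
  rw [Submodule.disjoint_def]
  intro Q hQ hker
  have hQ : Q ∈ homogeneousSubmodule (Fin (n + 1)) F d := by
    refine Submodule.span_le.mpr ?_ hQ
    rintro _ ⟨v, rfl⟩
    exact isHomogeneous_monomial _ v.2
  refine hQ.eq_zero_of_forall_vanishesToOrder hd fun x hx => ?_
  obtain ⟨w, hw, c, rfl⟩ := hS x hx
  exact (vanishesToOrder_of_evalHasseₗ_eq_zero hker hw).smul hQ c

end EvalMatrix

theorem stmt16_general (F : Type) [Field F] [Fintype F] (n m d : ℕ)
    (hn : 1 ≤ n) (hd : d < m * Fintype.card F)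
    (Pr : Finset (Fin n → F))
    (hPr : ∀ u : Fin n → F, u ≠ 0 → ∃! w, w ∈ Pr ∧ ∃ c : Fˣ, u = (c : F) • w) :
    LinearIndependent F (evalCol F n m d Pr) ∧
    Module.finrank F (Submodule.span F (Set.range (evalCol F n m d Pr)))
      = (d + n - 1).choose (n - 1) := by
  obtain ⟨n, rfl⟩ : ∃ k, n = k + 1 := ⟨n - 1, by omega⟩
  have hLI := linearIndependent_evalCol hd Pr fun x hx => by
    obtain ⟨w, ⟨hw, c, hxc⟩, -⟩ := hPr x hx
    exact ⟨w, hw, c, hxc⟩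
  have : Finite {v : Fin (n + 1) →₀ ℕ // (v.sum fun _ e => e) = d} :=
    (Finsupp.finite_of_degree_eq d).to_subtype
  have := Fintype.ofFinite {v : Fin (n + 1) →₀ ℕ // (v.sum fun _ e => e) = d}
  refine ⟨hLI, ?_⟩
  rw [finrank_span_eq_card hLI, ← Nat.card_eq_fintype_card, Finsupp.natCard_degree_eq_choose]
  simp

theorem stmt16 (F : Type) [Field F] [Fintype F] [DecidableEq F] (n m d : ℕ)
    (hn : 1 ≤ n) (hm : 1 ≤ m) (hd : d < m * Fintype.card F)
    (Pr : Finset (Fin n → F)) (hPr0 : ∀ u ∈ Pr, u ≠ 0)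
    (hPr : ∀ u : Fin n → F, u ≠ 0 → ∃! w, w ∈ Pr ∧ ∃ c : Fˣ, u = (c : F) • w) :
    LinearIndependent F (evalCol F n m d Pr) ∧
    Module.finrank F (Submodule.span F (Set.range (evalCol F n m d Pr)))
      = (d + n - 1).choose (n - 1) :=
  stmt16_general F n m d hn hd Pr hPr
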